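/- arXiv:0806.0150 — 3 statements merged into one kernel-verified Lean document; each statement's English description precedes it below -/
import Mathlib

section
/- For every real x with 1 ≤ x ≤ π − 1, the sum over n ≥ 1 of sin((2n−1)x)/(2n−1) equals π/4, and the sum over n ≥ 1 of sin(2n−1)·sin((2n−1)x)/(2n−1)² equals π/4. -/
open Real Filter Finset Topology

lemma bern2 (y : ℝ) : (Polynomial.map (algebraMap ℚ ℝ) (Polynomial.bernoulli 2)).eval y
    = y^2 - y + 1/6 := by
  have h : (bernoulli 2 : ℚ) = 1/6 := by
    rw [bernoulli_eq_bernoulli'_of_ne_one (by norm_num), bernoulli'_two]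
  simp [Polynomial.bernoulli, Finset.sum_range_succ, Polynomial.eval_finset_sum, h,
    bernoulli_one]
  ring

lemma cos_sum_full {t : ℝ} (ht0 : 0 ≤ t) (ht : t ≤ 2 * π) :
    HasSum (fun n : ℕ => 1 / (n : ℝ) ^ 2 * Real.cos (n * t)) (π ^ 2 / 6 - π * t / 2 + t ^ 2 / 4) := by
  have hπ : (0:ℝ) < π := pi_pos
  have hx : t / (2 * π) ∈ Set.Icc (0:ℝ) 1 := by
    constructor
    · positivity
    · rw [div_le_one (by positivity)]; linarith
  have h := hasSum_one_div_nat_pow_mul_cos (k := 1) one_ne_zero hx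
  rw [bern2] at h
  have hfun : (fun n : ℕ => 1 / (n : ℝ) ^ (2 * 1) * Real.cos (2 * π * n * (t / (2 * π))))
      = fun n : ℕ => 1 / (n : ℝ) ^ 2 * Real.cos (n * t) := by
    funext n
    have harg : 2 * π * (n:ℝ) * (t / (2 * π)) = n * t := by field_simp
    rw [harg]
  rw [hfun] at h
  convert h using 1
  have h2 : ((2 * 1).factorial : ℝ) = 2 := by norm_num [Nat.factorial]
  rw [h2]
  field_simp
  ring

lemma cos_odd_sum {t : ℝ} (ht0 : 0 ≤ t) (ht : t ≤ π) :
    HasSum (fun n : ℕ => Real.cos ((2 * n + 1) * t) / (2 * n + 1) ^ 2) (π ^ 2 / 8 - π * t / 4) := by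
  have hπ : (0:ℝ) < π := pi_pos
  set f : ℕ → ℝ := fun n => 1 / (n : ℝ) ^ 2 * Real.cos (n * t) with hf
  have hfull : HasSum f (π ^ 2 / 6 - π * t / 2 + t ^ 2 / 4) :=
    cos_sum_full ht0 (by linarith)
  have h2t : HasSum (fun n : ℕ => 1 / (n : ℝ) ^ 2 * Real.cos (n * (2 * t)))
      (π ^ 2 / 6 - π * (2 * t) / 2 + (2 * t) ^ 2 / 4) :=
    cos_sum_full (by linarith) (by linarith)
  have heven : HasSum (fun n : ℕ => f (2 * n))
      ((π ^ 2 / 6 - π * (2 * t) / 2 + (2 * t) ^ 2 / 4) / 4) := by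
    have h4 := h2t.div_const 4
    convert h4 using 1
    · rfl
    funext n
    rcases Nat.eq_zero_or_pos n with h | h
    · simp [hf, h]
    · have hn : (n : ℝ) ≠ 0 := Nat.cast_ne_zero.mpr h.ne'
      simp only [hf]
      have : ((2 * n : ℕ) : ℝ) * t = (n : ℝ) * (2 * t) := by push_cast; ring
      rw [this]
      push_cast
      field_simp
      ring_nf
  have hb : Summable (fun n : ℕ => 1 / ((n : ℝ) + 1) ^ 2) := by
    have := (summable_nat_add_iff (f := fun n : ℕ => 1 / (n : ℝ) ^ 2) 1).mpr
      (Real.summable_one_div_nat_pow.mpr one_lt_two)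
    convert this using 2 with n
    · rfl
    push_cast
    ring
  have hsumm : Summable (fun n : ℕ => f (2 * n + 1)) := by
    apply Summable.of_norm_bounded hb
    intro n
    simp only [hf, norm_mul, Real.norm_eq_abs]
    rw [abs_of_nonneg (by positivity : (0:ℝ) ≤ 1 / ((2 * n + 1 : ℕ) : ℝ) ^ 2)]
    calc 1 / ((2 * n + 1 : ℕ) : ℝ) ^ 2 * |Real.cos ((2 * n + 1 : ℕ) * t)|
        ≤ 1 / ((2 * n + 1 : ℕ) : ℝ) ^ 2 * 1 := by
          gcongr
          exact Real.abs_cos_le_one _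
      _ ≤ 1 / ((n : ℝ) + 1) ^ 2 := by
          rw [mul_one]
          apply one_div_le_one_div_of_le (by positivity)
          push_cast
          nlinarith [Nat.cast_nonneg (α := ℝ) n]
  have hodd : HasSum (fun n : ℕ => f (2 * n + 1)) (∑' n, f (2 * n + 1)) := hsumm.hasSum
  have hkey := heven.even_add_odd hodd
  have huniq := hkey.unique hfull
  have hval : (∑' n, f (2 * n + 1)) = π ^ 2 / 8 - π * t / 4 := by linarith
  rw [hval] at hodd
  convert hodd using 2 with n
  simp only [hf]
  push_cast
  rw [one_div, inv_mul_eq_div]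

lemma tel_sum (M N : ℕ) (hMN : M ≤ N) (f : ℕ → ℝ) :
    ∑ n ∈ Finset.Ico M N, (f n - f (n+1)) = f M - f N := by
  rw [Finset.sum_Ico_eq_sub _ hMN]
  have h1 : ∀ K, ∑ n ∈ Finset.range K, (f n - f (n+1)) = f 0 - f K := fun K => by
    simpa using Finset.sum_range_sub' f K
  rw [h1, h1]; ring

lemma sin_tail_bound {t : ℝ} (hs : 0 < Real.sin t) {M N : ℕ} (hMN : M ≤ N) :
    |∑ n ∈ Finset.Ico M N, Real.sin ((2*n+1)*t)/(2*n+1)| ≤ 1/((2*M+1) * Real.sin t) := by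
  set a : ℕ → ℝ := fun n => ((2*n+1:ℝ))⁻¹ with ha_def
  set b : ℕ → ℝ := fun n => Real.cos (2*n*t) with hb_def
  set T : ℕ → ℝ := fun n => a n * b n with hT_def
  have hapos : ∀ n : ℕ, 0 < a n := fun n => by positivity
  have hamono : ∀ n : ℕ, a (n+1) ≤ a n := fun n => by
    simp only [ha_def]
    apply inv_anti₀ (by positivity)
    push_cast; linarith
  have hble : ∀ n : ℕ, |b n| ≤ 1 := fun n => Real.abs_cos_le_one _
  have hident : ∀ n : ℕ, Real.sin ((2*n+1)*t)/(2*n+1) * (2 * Real.sin t)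
      = (T n - T (n+1)) + (a (n+1) - a n) * b (n+1) := by
    intro n
    have hcc : b n - b (n+1) = 2 * Real.sin ((2*n+1)*t) * Real.sin t := by
      simp only [hb_def]
      push_cast
      rw [Real.cos_sub_cos]
      have e1 : (2*(n:ℝ)*t + 2*((n:ℝ)+1)*t)/2 = (2*n+1)*t := by ring
      have e2 : (2*(n:ℝ)*t - 2*((n:ℝ)+1)*t)/2 = -t := by ring
      rw [e1, e2, Real.sin_neg]; ring
    have hsplit : T n - T (n+1) = a n * (b n - b (n+1)) - (a (n+1) - a n) * b (n+1) := by
      simp only [hT_def]; ring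
    rw [hsplit, hcc]
    have hne : (2*(n:ℝ)+1) ≠ 0 := by positivity
    simp only [ha_def]
    push_cast
    field_simp
    ring
  have key : (∑ n ∈ Finset.Ico M N, Real.sin ((2*n+1)*t)/(2*n+1)) * (2 * Real.sin t)
      = (T M - T N) + ∑ n ∈ Finset.Ico M N, (a (n+1) - a n) * b (n+1) := by
    rw [Finset.sum_mul]
    rw [Finset.sum_congr rfl (fun n _ => hident n)]
    rw [Finset.sum_add_distrib, tel_sum M N hMN T]
  have h2s : (0:ℝ) < 2 * Real.sin t := by linarith
  have hbound : |(∑ n ∈ Finset.Ico M N, Real.sin ((2*n+1)*t)/(2*n+1)) * (2 * Real.sin t)|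
      ≤ 2 * a M := by
    rw [key]
    calc |(T M - T N) + ∑ n ∈ Finset.Ico M N, (a (n+1) - a n) * b (n+1)|
        ≤ |T M - T N| + |∑ n ∈ Finset.Ico M N, (a (n+1) - a n) * b (n+1)| := abs_add_le _ _
      _ ≤ (|T M| + |T N|) + ∑ n ∈ Finset.Ico M N, (a n - a (n+1)) := by
          apply add_le_add (abs_sub _ _)
          refine (Finset.abs_sum_le_sum_abs _ _).trans (Finset.sum_le_sum fun n _ => ?_)
          rw [abs_mul]
          calc |a (n+1) - a n| * |b (n+1)| ≤ |a (n+1) - a n| * 1 := by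
                gcongr; exact hble _
            _ = a n - a (n+1) := by
                rw [mul_one, abs_of_nonpos (by linarith [hamono n])]; ring
      _ ≤ (a M + a N) + (a M - a N) := by
          rw [tel_sum M N hMN a]
          have hTle : ∀ n : ℕ, |T n| ≤ a n := fun n => by
            simp only [hT_def]
            rw [abs_mul, abs_of_pos (hapos n)]
            calc a n * |b n| ≤ a n * 1 := by gcongr; exact hble n
              _ = a n := mul_one _
          gcongr
          · exact hTle M
          · exact hTle N
      _ = 2 * a M := by ring
  rw [abs_mul, abs_of_pos h2s] at hbound
  have heq : (1:ℝ)/((2*M+1) * Real.sin t) = 2 * a M / (2 * Real.sin t) := by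
    simp only [ha_def]
    field_simp
  rw [heq]
  exact (le_div_iff₀ h2s).mpr hbound

lemma second_hasSum {x : ℝ} (h1 : 1 ≤ x) (h2 : x ≤ π - 1) :
    HasSum (fun n : ℕ => Real.sin (2*n+1) * Real.sin ((2*n+1)*x) / (2*n+1)^2) (π/4) := by
  have hπ := pi_gt_three
  have ha := cos_odd_sum (t := x - 1) (by linarith) (by linarith)
  have hb := cos_odd_sum (t := x + 1) (by linarith) (by linarith)
  have h := (ha.sub hb).div_const 2
  convert h using 1
  · rfl
  · funext n
    have hc : Real.cos ((2*(n:ℝ)+1)*(x-1)) - Real.cos ((2*(n:ℝ)+1)*(x+1))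
        = 2 * Real.sin ((2*n+1)*x) * Real.sin (2*n+1) := by
      rw [Real.cos_sub_cos]
      have e1 : ((2*(n:ℝ)+1)*(x-1) + (2*(n:ℝ)+1)*(x+1))/2 = (2*n+1)*x := by ring
      have e2 : ((2*(n:ℝ)+1)*(x-1) - (2*(n:ℝ)+1)*(x+1))/2 = -(2*n+1) := by ring
      rw [e1, e2, Real.sin_neg]; ring
    rw [div_sub_div_same, hc]
    ring
  · ring

lemma sin_lb {t : ℝ} (h1 : 1/2 ≤ t) (h2 : t ≤ π - 1/2) : Real.sin (1/2) ≤ Real.sin t := by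
  have hπ := pi_gt_three
  rcases le_total t (π/2) with h | h
  · apply Real.strictMonoOn_sin.monotoneOn ⟨by linarith, by linarith⟩ ⟨by linarith, by linarith⟩ h1
  · rw [← Real.sin_pi_sub t]
    apply Real.strictMonoOn_sin.monotoneOn ⟨by linarith, by linarith⟩ ⟨by linarith, by linarith⟩
      (by linarith)

lemma sin_odd_tendsto {x : ℝ} (hx1 : 1 ≤ x) (hx2 : x ≤ π - 1) :
    Tendsto (fun N : ℕ => ∑ n ∈ Finset.range N, Real.sin ((2*n+1)*x)/(2*n+1)) atTop
      (𝓝 (π/4)) := by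
  have hπ := pi_gt_three
  set s : Set ℝ := Set.Ioo (1/2 : ℝ) (π - 1/2) with hs_def
  have hsopen : IsOpen s := isOpen_Ioo
  have hxs : x ∈ s := ⟨by linarith, by linarith⟩
  have hc : 0 < Real.sin (1/2) :=
    Real.sin_pos_of_pos_of_lt_pi (by norm_num) (by linarith)
  have hlb : ∀ t ∈ s, Real.sin (1/2) ≤ Real.sin t := fun t ht =>
    sin_lb ht.1.le ht.2.le
  set sP : ℕ → ℝ → ℝ := fun N t => ∑ n ∈ Finset.range N, Real.sin ((2*n+1)*t)/(2*n+1)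
    with hsP_def
  have huc : UniformCauchySeqOn sP atTop s := by
    rw [Metric.uniformCauchySeqOn_iff]
    intro ε hε
    obtain ⟨K, hK⟩ := exists_nat_gt (1/(ε * Real.sin (1/2)))
    have hK0 : (0:ℝ) < K := lt_of_le_of_lt (by positivity) hK
    have hKε : 1/((2*(K:ℝ)+1) * Real.sin (1/2)) < ε := by
      rw [div_lt_iff₀ (by positivity)]
      rw [div_lt_iff₀ (by positivity)] at hK
      nlinarith [hc, hε]
    refine ⟨K, fun m hm n hn t ht => ?_⟩
    have hst : 0 < Real.sin t := lt_of_lt_of_le hc (hlb t ht)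
    have key : ∀ M N : ℕ, K ≤ M → M ≤ N → |sP N t - sP M t| < ε := by
      intro M N hKM hMN
      have hsub : sP N t - sP M t = ∑ n ∈ Finset.Ico M N, Real.sin ((2*n+1)*t)/(2*n+1) := by
        simp only [hsP_def]
        rw [Finset.sum_Ico_eq_sub _ hMN]
      rw [hsub]
      calc |∑ n ∈ Finset.Ico M N, Real.sin ((2*n+1)*t)/(2*n+1)|
          ≤ 1/((2*M+1) * Real.sin t) := sin_tail_bound hst hMN
        _ ≤ 1/((2*(K:ℝ)+1) * Real.sin (1/2)) := by
            apply one_div_le_one_div_of_le (by positivity)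
            have : (K:ℝ) ≤ M := Nat.cast_le.mpr hKM
            apply mul_le_mul (by linarith) (hlb t ht) hc.le (by positivity)
        _ < ε := hKε
    rw [Real.dist_eq]
    rcases le_total m n with h | h
    · rw [abs_sub_comm]; exact key m n hm h
    · exact key n m hn h
  have hptc : ∀ t ∈ s, ∃ l, Tendsto (fun N => sP N t) atTop (𝓝 l) := by
    intro t ht
    have hcs : CauchySeq (fun N => sP N t) := by
      rw [Metric.cauchySeq_iff]
      intro ε hε
      rcases Metric.uniformCauchySeqOn_iff.mp huc ε hε with ⟨K, hK⟩
      exact ⟨K, fun m hm n hn => hK m hm n hn t ht⟩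
    exact cauchySeq_tendsto_of_complete hcs
  classical
  set L : ℝ → ℝ := fun t => if h : t ∈ s then (hptc t h).choose else 0 with hL_def
  have hL : ∀ t ∈ s, Tendsto (fun N => sP N t) atTop (𝓝 (L t)) := by
    intro t ht
    simp only [hL_def, dif_pos ht]
    exact (hptc t ht).choose_spec
  have htu : TendstoUniformlyOn sP L atTop s := huc.tendstoUniformlyOn_of_tendsto hL
  set F : ℕ → ℝ → ℝ := fun N t => ∑ n ∈ Finset.range N, -(Real.cos ((2*n+1)*t)/(2*n+1)^2)
    with hF_def
  set g : ℝ → ℝ := fun t => -(π^2/8 - π*t/4) with hg_def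
  have hfg : ∀ t ∈ s, Tendsto (fun N => F N t) atTop (𝓝 (g t)) := by
    intro t ht
    have h := ((cos_odd_sum (t := t) (by linarith [ht.1]) (by linarith [ht.2])).tendsto_sum_nat).neg
    apply h.congr
    intro N
    simp only [hF_def]
    rw [Finset.sum_neg_distrib]
  have hderiv : ∀ N : ℕ, ∀ t ∈ s, HasDerivAt (F N) (sP N t) t := by
    intro N t _
    have hsum : HasDerivAt (F N)
        (∑ n ∈ Finset.range N, Real.sin ((2*n+1)*t)/(2*n+1)) t := by
      apply HasDerivAt.fun_sum
      intro n _
      have h1 : HasDerivAt (fun u : ℝ => (2*(n:ℝ)+1)*u) (2*(n:ℝ)+1) t := by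
        simpa using (hasDerivAt_id t).const_mul (2*(n:ℝ)+1)
      have h2 := (Real.hasDerivAt_cos ((2*(n:ℝ)+1)*t)).comp t h1
      have h3 := (h2.div_const ((2*(n:ℝ)+1)^2)).neg
      convert h3 using 1
      · rfl
      have hne : (2*(n:ℝ)+1) ≠ 0 := by positivity
      field_simp
    exact hsum
  have hmain : HasDerivAt g (L x) x :=
    hasDerivAt_of_tendstoUniformlyOn hsopen htu
      (Eventually.of_forall fun N t ht => hderiv N t ht) hfg hxs
  have hg' : HasDerivAt g (π/4) x := by
    have h0 : HasDerivAt g (-(0 - π*1/4)) x :=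
      ((hasDerivAt_const x (π^2/8)).sub (((hasDerivAt_id x).const_mul π).div_const 4)).neg
    convert h0 using 1
    ring
  have hLx : L x = π/4 := hmain.unique hg'
  have := hL x hxs
  rwa [hLx] at this

theorem stmt9 : ∀ x : ℝ, 1 ≤ x → x ≤ π - 1 →
    (Tendsto (fun N : ℕ => ∑ n ∈ Finset.Icc 1 N, Real.sin ((2 * n - 1) * x) / (2 * n - 1)) atTop (𝓝 (π / 4))) ∧
    (Tendsto (fun N : ℕ => ∑ n ∈ Finset.Icc 1 N, Real.sin (2 * n - 1) * Real.sin ((2 * n - 1) * x) / (2 * n - 1) ^ 2) atTop (𝓝 (π / 4))) := by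
  intro x hx1 hx2
  constructor
  · have h := sin_odd_tendsto hx1 hx2
    apply h.congr
    intro N
    rw [← Finset.Ico_add_one_right_eq_Icc, Finset.sum_Ico_eq_sum_range]
    simp only [Nat.add_sub_cancel]
    apply Finset.sum_congr rfl
    intro n _
    push_cast
    ring_nf
  · have h := (second_hasSum hx1 hx2).tendsto_sum_nat
    apply h.congr
    intro N
    rw [← Finset.Ico_add_one_right_eq_Icc, Finset.sum_Ico_eq_sum_range]
    simp only [Nat.add_sub_cancel]
    apply Finset.sum_congr rfl
    intro n _
    push_cast
    ring_nf
end

section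
/- ∑_{n=1}^∞ sin(3n)/n = ∑_{n=1}^∞ sin(n)sin(3n)/n² = ∑_{n=1}^∞ sin²(n)sin(3n)/n³ = ∑_{n=1}^∞ sin³(n)sin(3n)/n⁴ = (π − 3)/2. -/
open Real Filter Finset Topology Polynomial

lemma bpoly2 (x : ℝ) : (Polynomial.aeval x) (Polynomial.bernoulli 2) = x^2 - x + 1/6 := by
  rw [Polynomial.aeval_def, ← Polynomial.eval_map]
  simp_rw [Polynomial.bernoulli, Finset.sum_range_succ, Finset.sum_range_zero,
    Polynomial.map_add, Polynomial.map_zero, Polynomial.map_monomial, Polynomial.eval_add,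
    Polynomial.eval_zero, Polynomial.eval_monomial,
    bernoulli_eq_bernoulli'_of_ne_one (by decide : (0:ℕ) ≠ 1), bernoulli'_zero, _root_.bernoulli_one,
    bernoulli_eq_bernoulli'_of_ne_one (by decide : (2:ℕ) ≠ 1), bernoulli'_two]
  push_cast; norm_num [Nat.choose]; ring

lemma bpoly3 (x : ℝ) : (Polynomial.aeval x) (Polynomial.bernoulli 3) = x^3 - 3/2*x^2 + 1/2*x := by
  rw [Polynomial.aeval_def, ← Polynomial.eval_map]
  simp_rw [Polynomial.bernoulli, Finset.sum_range_succ, Finset.sum_range_zero,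
    Polynomial.map_add, Polynomial.map_zero, Polynomial.map_monomial, Polynomial.eval_add,
    Polynomial.eval_zero, Polynomial.eval_monomial,
    bernoulli_eq_bernoulli'_of_ne_one (by decide : (0:ℕ) ≠ 1), bernoulli'_zero, _root_.bernoulli_one,
    bernoulli_eq_bernoulli'_of_ne_one (by decide : (2:ℕ) ≠ 1), bernoulli'_two,
    bernoulli_eq_bernoulli'_of_ne_one (by decide : (3:ℕ) ≠ 1), bernoulli'_three]
  push_cast; norm_num [Nat.choose]; ring

lemma bpoly4 (x : ℝ) : (Polynomial.aeval x) (Polynomial.bernoulli 4) = x^4 - 2*x^3 + x^2 - 1/30 := by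
  rw [Polynomial.aeval_def, ← Polynomial.eval_map]
  simp_rw [Polynomial.bernoulli, Finset.sum_range_succ, Finset.sum_range_zero,
    Polynomial.map_add, Polynomial.map_zero, Polynomial.map_monomial, Polynomial.eval_add,
    Polynomial.eval_zero, Polynomial.eval_monomial,
    bernoulli_eq_bernoulli'_of_ne_one (by decide : (0:ℕ) ≠ 1), bernoulli'_zero, _root_.bernoulli_one,
    bernoulli_eq_bernoulli'_of_ne_one (by decide : (2:ℕ) ≠ 1), bernoulli'_two,
    bernoulli_eq_bernoulli'_of_ne_one (by decide : (3:ℕ) ≠ 1), bernoulli'_three,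
    bernoulli_eq_bernoulli'_of_ne_one (by decide : (4:ℕ) ≠ 1), bernoulli'_four]
  push_cast; norm_num [Nat.choose]; ring

lemma cos2series {θ : ℝ} (h0 : 0 ≤ θ) (h1 : θ ≤ 2*π) :
    HasSum (fun n : ℕ => Real.cos (θ*n) / (n:ℝ)^2) (π^2/6 - π*θ/2 + θ^2/4) := by
  have hπ := Real.pi_pos
  have hx : θ/(2*π) ∈ Set.Icc (0:ℝ) 1 := ⟨by positivity, by rw [div_le_one (by positivity)]; linarith⟩
  have H := hasSum_one_div_nat_pow_mul_cos one_ne_zero hx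
  norm_num at H
  rw [bpoly2] at H
  convert H using 1
  · funext n
    have e : 2*π*(n:ℝ)*(θ/(2*π)) = θ*n := by field_simp
    rw [e]; ring
  · norm_num [Nat.factorial]; field_simp; ring

lemma sin3series {θ : ℝ} (h0 : 0 ≤ θ) (h1 : θ ≤ 2*π) :
    HasSum (fun n : ℕ => Real.sin (θ*n) / (n:ℝ)^3) (π^2*θ/6 - π*θ^2/4 + θ^3/12) := by
  have hπ := Real.pi_pos
  have hx : θ/(2*π) ∈ Set.Icc (0:ℝ) 1 := ⟨by positivity, by rw [div_le_one (by positivity)]; linarith⟩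
  have H := hasSum_one_div_nat_pow_mul_sin one_ne_zero hx
  norm_num at H
  rw [bpoly3] at H
  convert H using 1
  · funext n
    have e : 2*π*(n:ℝ)*(θ/(2*π)) = θ*n := by field_simp
    rw [e]; ring
  · norm_num [Nat.factorial]; field_simp; ring

lemma cos4series {θ : ℝ} (h0 : 0 ≤ θ) (h1 : θ ≤ 2*π) :
    HasSum (fun n : ℕ => Real.cos (θ*n) / (n:ℝ)^4) (π^4/90 - π^2*θ^2/12 + π*θ^3/12 - θ^4/48) := by
  have hπ := Real.pi_pos
  have hx : θ/(2*π) ∈ Set.Icc (0:ℝ) 1 := ⟨by positivity, by rw [div_le_one (by positivity)]; linarith⟩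
  have H := hasSum_one_div_nat_pow_mul_cos two_ne_zero hx
  norm_num at H
  rw [bpoly4] at H
  convert H using 1
  · funext n
    have e : 2*π*(n:ℝ)*(θ/(2*π)) = θ*n := by field_simp
    rw [e]; ring
  · norm_num [Nat.factorial]; field_simp; ring
lemma trig2 (t : ℝ) : Real.sin t * Real.sin (3*t) = Real.cos (2*t)/2 - Real.cos (4*t)/2 := by
  rw [show (4:ℝ)*t = 3*t + t by ring, show (2:ℝ)*t = 3*t - t by ring, Real.cos_add, Real.cos_sub]
  ring

lemma trig3 (t : ℝ) : Real.sin t ^ 2 * Real.sin (3*t) = Real.sin (3*t)/2 - Real.sin (5*t)/4 - Real.sin t/4 := by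
  rw [show (5:ℝ)*t = 2*t + 3*t by ring, Real.sin_add, Real.sin_two_mul, Real.cos_two_mul,
    Real.sin_three_mul, Real.cos_three_mul]
  linear_combination (2*Real.sin t*Real.cos t^2 - 4*Real.sin t^3 + 2*Real.sin t) * Real.sin_sq_add_cos_sq t

lemma trig4 (t : ℝ) : Real.sin t ^ 3 * Real.sin (3*t)
    = 3*Real.cos (2*t)/8 - 3*Real.cos (4*t)/8 + Real.cos (6*t)/8 - 1/8 := by
  rw [show (6:ℝ)*t = 2*t + 4*t by ring, Real.cos_add, show (4:ℝ)*t = 2*t + 2*t by ring,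
    Real.cos_add, Real.sin_add, Real.sin_two_mul, Real.cos_two_mul, Real.sin_three_mul]
  linear_combination (-Real.cos t^4 + 4*Real.sin t^2*Real.cos t^2 + 2*Real.cos t^2
    - 4*Real.sin t^4 - Real.sin t^2 - 1) * Real.sin_sq_add_cos_sq t

lemma tendsto_Icc_of_hasSum {f : ℕ → ℝ} {l : ℝ} (hf : f 0 = 0) (h : HasSum f l) :
    Tendsto (fun N : ℕ => ∑ n ∈ Finset.Icc 1 N, f n) atTop (𝓝 l) := by
  have h2 := h.tendsto_sum_nat.comp (tendsto_add_atTop_nat 1)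
  convert h2 using 2 with N
  rw [Function.comp_apply, Finset.sum_range_succ', hf, add_zero, ← Finset.Ico_add_one_right_eq_Icc,
    Finset.sum_Ico_eq_sum_range]
  simp [add_comm]

noncomputable def w : ℂ := Complex.exp (3 * Complex.I)

lemma hw_abs : ‖w‖ = 1 := by
  rw [w, Complex.norm_exp]
  norm_num

lemma hw_ne : w ≠ 1 := by
  intro hc
  rw [w, Complex.exp_eq_one_iff] at hc
  obtain ⟨n, h⟩ := hc
  have him := congrArg Complex.im h
  simp [Complex.mul_im] at him
  have hπ := Real.pi_gt_three
  rcases le_or_gt (n:ℝ) 0 with hn | hn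
  · nlinarith
  · have h1 : (1:ℝ) ≤ n := by exact_mod_cast (by exact_mod_cast hn : (0:ℤ) < n)
    nlinarith

lemma sin3_eq (i : ℕ) : Real.sin (3 * (i:ℝ)) = (w ^ i).im := by
  rw [w, ← Complex.exp_nat_mul]
  rw [show (i:ℂ) * (3 * Complex.I) = ((3 * (i:ℝ) : ℝ) : ℂ) * Complex.I by push_cast; ring]
  rw [Complex.exp_ofReal_mul_I_im]

lemma partial_sin_bound (n : ℕ) : ‖∑ i ∈ Finset.range n, Real.sin (3 * (i:ℝ))‖ ≤ 2 / ‖w - 1‖ := by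
  have hne : ‖w - 1‖ ≠ 0 := by
    simpa [sub_eq_zero] using hw_ne
  have hpos : 0 < ‖w - 1‖ := lt_of_le_of_ne (norm_nonneg _) (Ne.symm hne)
  calc ‖∑ i ∈ Finset.range n, Real.sin (3 * (i:ℝ))‖
      = |(∑ i ∈ Finset.range n, w ^ i).im| := by
        rw [Complex.im_sum]
        simp_rw [← sin3_eq]
        rfl
    _ ≤ ‖∑ i ∈ Finset.range n, w ^ i‖ := Complex.abs_im_le_norm _
    _ = ‖(w ^ n - 1) / (w - 1)‖ := by rw [geom_sum_eq hw_ne]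
    _ = ‖w ^ n - 1‖ / ‖w - 1‖ := by rw [norm_div]
    _ ≤ 2 / ‖w - 1‖ := by
        gcongr
        calc ‖w ^ n - 1‖ ≤ ‖w ^ n‖ + ‖(1:ℂ)‖ := by
              simpa using norm_sub_le (w ^ n) 1
          _ = 2 := by rw [norm_pow, hw_abs]; norm_num

example : True := trivial

-- Dirichlet test: convergence of partial sums of sin(3n)/n
lemma exists_limit : ∃ l : ℝ, Tendsto (fun N : ℕ => ∑ i ∈ Finset.range N, Real.sin (3 * (i:ℝ)) / i) atTop (𝓝 l) := by
  set B := 2 / ‖w - 1‖ with hB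
  have hfa : Antitone (fun n : ℕ => ((n:ℝ) + 1)⁻¹) := by
    intro a b hab
    apply inv_anti₀ (by positivity)
    have : (a:ℝ) ≤ b := by exact_mod_cast hab
    linarith
  have hf0 : Tendsto (fun n : ℕ => ((n:ℝ) + 1)⁻¹) atTop (𝓝 0) := by
    simpa [one_div] using tendsto_one_div_add_atTop_nhds_zero_nat (𝕜 := ℝ)
  have hzb : ∀ n : ℕ, ‖∑ i ∈ Finset.range n, Real.sin (3 * ((i:ℝ) + 1))‖ ≤ B := by
    intro n
    have : ∑ i ∈ Finset.range n, Real.sin (3 * ((i:ℝ) + 1)) = ∑ i ∈ Finset.range (n+1), Real.sin (3 * (i:ℝ)) := by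
      rw [Finset.sum_range_succ']
      push_cast
      norm_num
    rw [this]
    exact partial_sin_bound (n+1)
  have hC := hfa.cauchySeq_series_mul_of_tendsto_zero_of_bounded hf0 hzb
  obtain ⟨l, hl⟩ := cauchySeq_tendsto_of_complete hC
  refine ⟨l, ?_⟩
  have hl' : Tendsto (fun n : ℕ => ∑ i ∈ Finset.range n, ((i:ℝ) + 1)⁻¹ * Real.sin (3 * ((i:ℝ) + 1))) atTop (𝓝 l) := by
    simpa [smul_eq_mul] using hl
  have key : ∀ N : ℕ, ∑ i ∈ Finset.range N, ((i:ℝ) + 1)⁻¹ * Real.sin (3 * ((i:ℝ) + 1))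
      = ∑ i ∈ Finset.range (N+1), Real.sin (3 * (i:ℝ)) / i := by
    intro N
    rw [Finset.sum_range_succ']
    push_cast
    simp [smul_eq_mul, div_eq_inv_mul]
  exact (tendsto_add_atTop_iff_nat 1).mp (hl'.congr key)

lemma w_re : w.re = Real.cos 3 := by
  rw [w, show (3:ℂ) = ((3:ℝ):ℂ) by norm_num, Complex.exp_ofReal_mul_I_re]

lemma w_im : w.im = Real.sin 3 := by
  rw [w, show (3:ℂ) = ((3:ℝ):ℂ) by norm_num, Complex.exp_ofReal_mul_I_im]

lemma arg_value : -(Complex.log (1 - w)).im = (π - 3) / 2 := by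
  have hπ := Real.pi_gt_three
  have hπ' := Real.pi_lt_d2
  have hs : 0 < Real.sin (3/2) := Real.sin_pos_of_pos_of_lt_pi (by norm_num) (by linarith)
  have hc3 : Real.cos 3 = 2 * Real.cos (3/2)^2 - 1 := by
    have := Real.cos_two_mul (3/2); norm_num at this; linarith
  have hs3 : Real.sin 3 = 2 * Real.sin (3/2) * Real.cos (3/2) := by
    have := Real.sin_two_mul (3/2); norm_num at this; linarith
  have harg : Complex.arg (1 - w) = 3/2 - π/2 := by
    have he : 1 - w = ((2 * Real.sin (3/2) : ℝ) : ℂ) *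
        (Complex.cos ((3/2 - π/2 : ℝ) : ℂ) + Complex.sin ((3/2 - π/2 : ℝ) : ℂ) * Complex.I) := by
      apply Complex.ext
      · simp only [Complex.sub_re, Complex.one_re, Complex.mul_re, Complex.ofReal_re,
          Complex.ofReal_im, Complex.add_re, Complex.add_im, Complex.mul_im,
          Complex.cos_ofReal_re, Complex.cos_ofReal_im, Complex.sin_ofReal_re,
          Complex.sin_ofReal_im, Complex.I_re, Complex.I_im, w_re]
        rw [Real.cos_sub_pi_div_two]
        nlinarith [Real.sin_sq_add_cos_sq (3/2)]
      · simp only [Complex.sub_im, Complex.one_im, Complex.mul_im, Complex.ofReal_re,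
          Complex.ofReal_im, Complex.add_re, Complex.add_im, Complex.mul_re,
          Complex.cos_ofReal_re, Complex.cos_ofReal_im, Complex.sin_ofReal_re,
          Complex.sin_ofReal_im, Complex.I_re, Complex.I_im, w_im]
        rw [Real.sin_sub_pi_div_two]
        nlinarith
    rw [he]
    exact Complex.arg_mul_cos_add_sin_mul_I (by positivity) ⟨by linarith, by linarith⟩
  rw [Complex.log_im, harg]
  ring

lemma tsum_eq_log (x : ℝ) (hx : |x| < 1) :
    ∑' n : ℕ, (Real.sin (3 * (n:ℝ)) / n) * x ^ n = -(Complex.log (1 - (x:ℂ) * w)).im := by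
  have hz : ‖(x:ℂ) * w‖ < 1 := by
    rw [norm_mul, hw_abs, Complex.norm_real]
    simpa using hx
  have H := Complex.hasSum_taylorSeries_neg_log hz
  have Him := ((Complex.hasSum_iff _ _).mp H).2
  have heq : ∀ n : ℕ, ((((x:ℂ) * w) ^ n / n).im) = (Real.sin (3 * (n:ℝ)) / n) * x ^ n := by
    intro n
    rw [mul_pow, show (w : ℂ) ^ n = Complex.exp ((3 * (n:ℝ) : ℝ) * Complex.I) by
      rw [w, ← Complex.exp_nat_mul]; congr 1; push_cast; ring]
    rw [show ((n:ℂ)) = ((n:ℝ):ℂ) by push_cast; rfl, Complex.div_ofReal_im]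
    rw [show ((x:ℂ)) ^ n = ((x ^ n : ℝ) : ℂ) by push_cast; rfl]
    rw [Complex.mul_im, Complex.ofReal_re, Complex.ofReal_im, Complex.exp_ofReal_mul_I_im]
    ring
  have Him' : HasSum (fun n : ℕ => (Real.sin (3 * (n:ℝ)) / n) * x ^ n)
      ((-(Complex.log (1 - (x:ℂ) * w))).im) := by
    simpa only [heq] using Him
  rw [Him'.tsum_eq, Complex.neg_im]

lemma sum1 : Tendsto (fun N : ℕ => ∑ n ∈ Finset.Icc 1 N, Real.sin (3 * (n:ℝ)) / n) atTop (𝓝 ((π - 3) / 2)) := by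
  obtain ⟨l, hl⟩ := exists_limit
  have hAbel := Real.tendsto_tsum_powerSeries_nhdsWithin_lt hl
  have hev : (fun x : ℝ => ∑' n : ℕ, (Real.sin (3 * (n:ℝ)) / n) * x ^ n)
      =ᶠ[𝓝[<] (1:ℝ)] (fun x : ℝ => -(Complex.log (1 - (x:ℂ) * w)).im) := by
    filter_upwards [Ioo_mem_nhdsLT_of_mem (⟨by norm_num, le_refl (1:ℝ)⟩ : (1:ℝ) ∈ Set.Ioc (-1:ℝ) 1)] with x hx
    exact tsum_eq_log x (abs_lt.mpr ⟨hx.1, hx.2⟩)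
  have hAbel' : Tendsto (fun x : ℝ => -(Complex.log (1 - (x:ℂ) * w)).im) (𝓝[<] (1:ℝ)) (𝓝 l) :=
    hAbel.congr' hev
  have hmem : (1 : ℂ) - w ∈ Complex.slitPlane := by
    apply Complex.mem_slitPlane_iff.mpr
    left
    have hc : Real.cos 3 ≤ 0 := Real.cos_nonpos_of_pi_div_two_le_of_le
      (by linarith [Real.pi_lt_d2]) (by linarith [Real.pi_gt_three])
    simp only [Complex.sub_re, Complex.one_re, w_re]
    linarith
  have hcont : Tendsto (fun x : ℝ => -(Complex.log (1 - (x:ℂ) * w)).im) (𝓝[<] (1:ℝ))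
      (𝓝 (-(Complex.log (1 - w)).im)) := by
    have t1 : Tendsto (fun x : ℝ => (1 : ℂ) - (x:ℂ) * w) (𝓝 1) (𝓝 (1 - w)) := by
      have c1 : ContinuousAt (fun x : ℝ => (1 : ℂ) - (x:ℂ) * w) 1 :=
        (continuous_const.sub (Complex.continuous_ofReal.mul continuous_const)).continuousAt
      have := c1.tendsto
      simpa using this
    have t2 : Tendsto Complex.log (𝓝 (1 - w)) (𝓝 (Complex.log (1 - w))) :=
      (continuousAt_clog hmem).tendsto
    have t3 := t2.comp t1
    have t4 := (Complex.continuous_im.tendsto (Complex.log (1 - w))).comp t3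
    have t5 := t4.neg
    have t6 : Tendsto (fun x : ℝ => -(Complex.log (1 - (x:ℂ) * w)).im) (𝓝 (1:ℝ))
        (𝓝 (-(Complex.log (1 - w)).im)) := by
      simpa [Function.comp] using t5
    exact t6.mono_left nhdsWithin_le_nhds
  have hle : l = (π - 3)/2 := by
    rw [← arg_value]
    exact tendsto_nhds_unique hAbel' hcont
  rw [← hle]
  -- convert range-limit hl to Icc
  have : ∀ N : ℕ, ∑ n ∈ Finset.Icc 1 N, Real.sin (3 * (n:ℝ)) / n
      = ∑ n ∈ Finset.range (N+1), Real.sin (3 * (n:ℝ)) / n := by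
    intro N
    rw [Finset.sum_range_succ', ← Finset.Ico_add_one_right_eq_Icc, Finset.sum_Ico_eq_sum_range]
    simp [add_comm]
  rw [show (fun N : ℕ => ∑ n ∈ Finset.Icc 1 N, Real.sin (3 * (n:ℝ)) / n)
      = fun N : ℕ => ∑ n ∈ Finset.range (N+1), Real.sin (3 * (n:ℝ)) / n from funext this]
  exact hl.comp (tendsto_add_atTop_nat 1)

lemma sum2h : HasSum (fun n : ℕ => Real.sin n * Real.sin (3*(n:ℝ))/(n:ℝ)^2) ((π-3)/2) := by
  have hπ := Real.pi_gt_three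
  have H := ((cos2series (θ:=2) (by norm_num) (by linarith)).sub
    (cos2series (θ:=4) (by norm_num) (by linarith))).div_const 2
  convert H using 1
  · rfl
  · funext n; rw [trig2 (n:ℝ)]; ring
  · ring

lemma sum3h : HasSum (fun n : ℕ => Real.sin n ^ 2 * Real.sin (3*(n:ℝ))/(n:ℝ)^3) ((π-3)/2) := by
  have hπ := Real.pi_gt_three
  have H := (((sin3series (θ:=3) (by norm_num) (by linarith)).div_const 2).sub
    ((sin3series (θ:=5) (by norm_num) (by linarith)).div_const 4)).sub
    ((sin3series (θ:=1) (by norm_num) (by linarith)).div_const 4)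
  convert H using 1
  · rfl
  · funext n; rw [trig3 (n:ℝ)]; ring
  · ring

lemma sum4h : HasSum (fun n : ℕ => Real.sin n ^ 3 * Real.sin (3*(n:ℝ))/(n:ℝ)^4) ((π-3)/2) := by
  have hπ := Real.pi_gt_three
  have H := ((((cos4series (θ:=2) (by norm_num) (by linarith)).mul_left (3/8)).sub
    ((cos4series (θ:=4) (by norm_num) (by linarith)).mul_left (3/8))).add
    ((cos4series (θ:=6) (by norm_num) (by linarith)).mul_left (1/8))).sub
    (hasSum_zeta_four.mul_left (1/8))
  convert H using 1
  · rfl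
  · funext n; rw [trig4 (n:ℝ)]; ring
  · ring

theorem stmt15 : (Tendsto (fun N : ℕ => ∑ n ∈ Finset.Icc 1 N, Real.sin (3 * n) / n) atTop (𝓝 ((π - 3) / 2))) ∧
    (Tendsto (fun N : ℕ => ∑ n ∈ Finset.Icc 1 N, Real.sin n * Real.sin (3 * n) / n ^ 2) atTop (𝓝 ((π - 3) / 2))) ∧
    (Tendsto (fun N : ℕ => ∑ n ∈ Finset.Icc 1 N, Real.sin n ^ 2 * Real.sin (3 * n) / n ^ 3) atTop (𝓝 ((π - 3) / 2))) ∧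
    (Tendsto (fun N : ℕ => ∑ n ∈ Finset.Icc 1 N, Real.sin n ^ 3 * Real.sin (3 * n) / n ^ 4) atTop (𝓝 ((π - 3) / 2))) := by
  refine ⟨sum1, ?_, ?_, ?_⟩
  · exact tendsto_Icc_of_hasSum (by norm_num) sum2h
  · exact tendsto_Icc_of_hasSum (by norm_num) sum3h
  · exact tendsto_Icc_of_hasSum (by norm_num) sum4h
end

section
/- For every real x with 0 < x < 2π/3, ∑_{n=1}^∞ sin³(nx)/n = π/4; and for every real x with 0 ≤ x ≤ π/2, ∑_{n=1}^∞ sin⁴(nx)/n² = πx/4. In particular ∑_{n=1}^∞ sin³(n)/n = ∑_{n=1}^∞ sin⁴(n)/n² = π/4. -/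
open Real Filter Finset Topology

/-- Key lemma: `∑ sin(nθ)/n = (π - θ)/2` for `0 < θ < 2π`. -/
lemma sinSum {θ : ℝ} (h1 : 0 < θ) (h2 : θ < 2 * π) :
    Tendsto (fun N : ℕ => ∑ n ∈ Finset.range N, Real.sin (n * θ) / n) atTop
      (𝓝 ((π - θ) / 2)) := by
  set w : ℂ := Complex.exp (θ * Complex.I) with hw
  have hwnorm : ‖w‖ = 1 := by simp [hw, Complex.norm_exp_ofReal_mul_I]
  have hw1 : w ≠ 1 := by
    intro h
    rw [hw, Complex.exp_eq_one_iff] at h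
    obtain ⟨n, hn⟩ := h
    have hI : ((θ : ℂ)) = (n : ℂ) * (2 * π) := by
      have := mul_right_cancel₀ Complex.I_ne_zero (by rw [hn]; ring : (θ : ℂ) * Complex.I = ((n : ℂ) * (2 * π)) * Complex.I)
      exact this
    have hR : θ = (n : ℝ) * (2 * π) := by exact_mod_cast hI
    have hpi := Real.pi_pos
    have hn0 : (0 : ℝ) < (n : ℝ) := by nlinarith
    have hn1 : (n : ℝ) < 1 := by nlinarith
    have : (0 : ℤ) < n := by exact_mod_cast hn0
    have : n < 1 := by exact_mod_cast hn1
    omega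
  have hwsub : w - 1 ≠ 0 := sub_ne_zero.mpr hw1
  -- Dirichlet test: partial sums of w^(i+1) are bounded
  have hb : ∀ n : ℕ, ‖∑ i ∈ Finset.range n, w ^ (i + 1)‖ ≤ 2 / ‖w - 1‖ := by
    intro n
    have hgeom : ∑ i ∈ Finset.range n, w ^ (i + 1) = w * ((w ^ n - 1) / (w - 1)) := by
      simp_rw [pow_succ']
      rw [← Finset.mul_sum, geom_sum_eq hw1]
    rw [hgeom, norm_mul, norm_div]
    have : ‖w‖ = 1 := hwnorm
    rw [this, one_mul]
    gcongr
    calc ‖w ^ n - 1‖ ≤ ‖w ^ n‖ + ‖(1 : ℂ)‖ := norm_sub_le _ _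
      _ = 2 := by rw [norm_pow]; rw [show ‖w‖ = 1 from hwnorm]; norm_num
  have hanti : Antitone (fun n : ℕ => 1 / ((n : ℝ) + 1)) := by
    intro a b hab
    have : (a : ℝ) + 1 ≤ (b : ℝ) + 1 := by exact_mod_cast by omega
    exact one_div_le_one_div_of_le (by positivity) this
  have h0 : Tendsto (fun n : ℕ => 1 / ((n : ℝ) + 1)) atTop (𝓝 0) :=
    tendsto_one_div_add_atTop_nhds_zero_nat
  have hcauchy : CauchySeq fun n : ℕ =>
      ∑ i ∈ Finset.range n, (1 / ((i : ℝ) + 1)) • w ^ (i + 1) :=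
    hanti.cauchySeq_series_mul_of_tendsto_zero_of_bounded h0 hb
  obtain ⟨l, hl⟩ := cauchySeq_tendsto_of_complete hcauchy
  -- partial sums of F n := w^n / n converge to l
  set F : ℕ → ℂ := fun n => w ^ n / n with hF
  have hFsum : Tendsto (fun N : ℕ => ∑ n ∈ Finset.range N, F n) atTop (𝓝 l) := by
    rw [← tendsto_add_atTop_iff_nat 1]
    convert hl using 1
    funext N
    rw [Finset.sum_range_succ']
    simp only [hF]
    rw [pow_zero]
    push_cast
    simp only [Nat.cast_zero, div_zero, add_zero]
    refine Finset.sum_congr rfl fun i _ => ?_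
    rw [Complex.real_smul]
    push_cast
    field_simp
  -- Abel's limit theorem
  have habel := Complex.tendsto_tsum_powerSeries_nhdsWithin_lt hFsum
  rw [tendsto_map'_iff] at habel
  set G : ℝ → ℂ := fun r => -Complex.log (1 - r * w) with hG
  have hs : 0 < Real.sin (θ / 2) :=
    Real.sin_pos_of_pos_of_lt_pi (by linarith) (by linarith)
  have hc : Real.cos θ = 2 * Real.cos (θ / 2) ^ 2 - 1 := by
    rw [← Real.cos_two_mul]; ring_nf
  have hsin2 : Real.sin θ = 2 * Real.sin (θ / 2) * Real.cos (θ / 2) := by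
    rw [← Real.sin_two_mul]; ring_nf
  have hpyth := Real.sin_sq_add_cos_sq (θ / 2)
  have hfact : 1 - w = ((2 * Real.sin (θ / 2) : ℝ) : ℂ) *
      (↑(Real.cos (θ / 2 - π / 2)) + ↑(Real.sin (θ / 2 - π / 2)) * Complex.I) := by
    rw [Real.cos_sub_pi_div_two, Real.sin_sub_pi_div_two, hw]
    apply Complex.ext
    · simp only [Complex.sub_re, Complex.one_re, Complex.mul_re, Complex.mul_im,
        Complex.add_re, Complex.add_im, Complex.ofReal_re, Complex.ofReal_im,
        Complex.I_re, Complex.I_im, Complex.exp_ofReal_mul_I_re, Complex.exp_ofReal_mul_I_im]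
      nlinarith
    · simp only [Complex.sub_im, Complex.one_im, Complex.mul_re, Complex.mul_im,
        Complex.add_re, Complex.add_im, Complex.ofReal_re, Complex.ofReal_im,
        Complex.I_re, Complex.I_im, Complex.exp_ofReal_mul_I_re, Complex.exp_ofReal_mul_I_im]
      nlinarith
  have harg : Complex.arg (1 - w) = θ / 2 - π / 2 := by
    rw [hfact]
    rw [show (↑(Real.cos (θ / 2 - π / 2)) + ↑(Real.sin (θ / 2 - π / 2)) * Complex.I)
        = Complex.cos ↑(θ / 2 - π / 2) + Complex.sin ↑(θ / 2 - π / 2) * Complex.I by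
      rw [Complex.ofReal_cos, Complex.ofReal_sin]]
    rw [Complex.arg_real_mul _ (by positivity),
      Complex.arg_cos_add_sin_mul_I ⟨by linarith [Real.pi_pos], by linarith [Real.pi_pos]⟩]
  have hre : 0 < (1 - w).re := by
    have : (1 - w).re = 1 - Real.cos θ := by
      simp [hw, Complex.exp_ofReal_mul_I_re]
    rw [this]; nlinarith
  have hcont : Tendsto G (𝓝[<] (1 : ℝ)) (𝓝 (-Complex.log (1 - w))) := by
    have hca : ContinuousAt G 1 := by
      apply ContinuousAt.neg
      apply (continuousAt_clog (Or.inl ?_)).comp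
      · exact (continuous_const.sub (Complex.continuous_ofReal.mul continuous_const)).continuousAt
      · simpa using hre
    have := hca.tendsto.mono_left (nhdsWithin_le_nhds : 𝓝[<] (1 : ℝ) ≤ 𝓝 1)
    simpa [hG] using this
  have heq : ∀ᶠ r in 𝓝[<] (1 : ℝ), ((fun z => ∑' n, F n * z ^ n) ∘ Complex.ofReal) r = G r := by
    filter_upwards [Ioo_mem_nhdsLT_of_mem
      (⟨by norm_num, le_refl (1 : ℝ)⟩ : (1 : ℝ) ∈ Set.Ioc (-1 : ℝ) 1)] with r hr
    have hrnorm : ‖(r : ℂ) * w‖ < 1 := by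
      rw [norm_mul, Complex.norm_real, show ‖w‖ = 1 from hwnorm, mul_one]
      exact abs_lt.mpr ⟨hr.1, hr.2⟩
    have hlog := Complex.hasSum_taylorSeries_neg_log hrnorm
    simp only [Function.comp_apply, hG]
    rw [← hlog.tsum_eq]
    apply tsum_congr
    intro n
    rw [mul_pow]
    simp only [hF]
    ring
  have hlval : l = -Complex.log (1 - w) :=
    tendsto_nhds_unique (habel.congr' heq) hcont
  have hval : (-Complex.log (1 - w)).im = (π - θ) / 2 := by
    rw [Complex.neg_im, Complex.log_im, harg]; ring
  have him : ∀ N : ℕ, ∑ n ∈ Finset.range N, Real.sin (n * θ) / n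
      = (∑ n ∈ Finset.range N, F n).im := by
    intro N
    rw [Complex.im_sum]
    refine Finset.sum_congr rfl fun n _ => ?_
    simp only [hF]
    rw [hw, ← Complex.exp_nat_mul]
    rw [show (n : ℂ) * (↑θ * Complex.I) = ↑((n : ℝ) * θ) * Complex.I by push_cast; ring]
    rw [show ((n : ℕ) : ℂ) = ((n : ℝ) : ℂ) by push_cast; rfl, Complex.div_ofReal_im,
      Complex.exp_ofReal_mul_I_im]
  have hfinal : Tendsto (fun N : ℕ => (∑ n ∈ Finset.range N, F n).im) atTop
      (𝓝 ((-Complex.log (1 - w)).im)) := by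
    rw [← hlval]
    exact (Complex.continuous_im.tendsto l).comp hFsum
  rw [← hval]
  exact hfinal.congr fun N => (him N).symm

lemma bernoulli_two_poly : Polynomial.bernoulli 2 =
    Polynomial.X ^ 2 - Polynomial.X + Polynomial.C (1 / 6 : ℚ) := by
  simp_rw [Polynomial.bernoulli, Finset.sum_range_succ, Finset.sum_range_zero]
  rw [bernoulli_one, bernoulli_eq_bernoulli'_of_ne_one zero_ne_one, bernoulli'_zero,
    bernoulli_eq_bernoulli'_of_ne_one (by decide : 2 ≠ 1), bernoulli'_two]
  simp [← Polynomial.C_mul_X_pow_eq_monomial]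
  ring

lemma cosSum {θ : ℝ} (h1 : 0 ≤ θ) (h2 : θ ≤ 2 * π) :
    HasSum (fun n : ℕ => Real.cos (n * θ) / (n : ℝ) ^ 2)
      (π ^ 2 / 6 - π * θ / 2 + θ ^ 2 / 4) := by
  have hpi := Real.pi_pos
  have hx : θ / (2 * π) ∈ Set.Icc (0 : ℝ) 1 :=
    ⟨by positivity, by rw [div_le_one (by positivity)]; linarith⟩
  have h := hasSum_one_div_nat_pow_mul_cos one_ne_zero hx
  have hB : (Polynomial.aeval (θ / (2 * π))) (Polynomial.bernoulli 2)
      = (θ / (2 * π)) ^ 2 - θ / (2 * π) + 1 / 6 := by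
    rw [bernoulli_two_poly]
    simp
  norm_num [Nat.factorial] at h
  rw [hB] at h
  convert h using 1
  · funext n
    rw [show 2 * π * (n : ℝ) * (θ / (2 * π)) = (n : ℝ) * θ by field_simp]
    ring
  · field_simp
    ring

lemma Icc_sum_eq {g : ℕ → ℝ} (hg : g 0 = 0) (N : ℕ) :
    ∑ n ∈ Finset.Icc 1 N, g n = ∑ n ∈ Finset.range (N + 1), g n := by
  rw [Finset.range_eq_Ico, Finset.sum_eq_sum_Ico_succ_bot (Nat.succ_pos N), hg, zero_add,
    ← Finset.Ico_add_one_right_eq_Icc]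
  rfl

lemma part1 (x : ℝ) (hx0 : 0 < x) (hx2 : x < 2 * π / 3) :
    Tendsto (fun N : ℕ => ∑ n ∈ Finset.Icc 1 N, Real.sin (n * x) ^ 3 / n) atTop
      (𝓝 (π / 4)) := by
  have hpi := Real.pi_pos
  have hA := sinSum hx0 (by linarith : x < 2 * π)
  have hB := sinSum (by linarith : (0:ℝ) < 3 * x) (by linarith : 3 * x < 2 * π)
  have comb := ((hA.const_mul 3).sub hB).div_const 4
  have hval : (3 * ((π - x) / 2) - (π - 3 * x) / 2) / 4 = π / 4 := by ring
  rw [hval] at comb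
  refine Tendsto.congr ?_ (comb.comp (tendsto_add_atTop_nat 1))
  intro N
  simp only [Function.comp_apply]
  rw [Icc_sum_eq (g := fun n => Real.sin (n * x) ^ 3 / n) (by simp) N]
  rw [Finset.mul_sum, ← Finset.sum_sub_distrib, Finset.sum_div]
  refine Finset.sum_congr rfl fun n _ => ?_
  rw [show (n : ℝ) * (3 * x) = 3 * ((n : ℝ) * x) by ring, Real.sin_three_mul]
  ring

lemma part2 (x : ℝ) (hx0 : 0 ≤ x) (hx2 : x ≤ π / 2) :
    Tendsto (fun N : ℕ => ∑ n ∈ Finset.Icc 1 N, Real.sin (n * x) ^ 4 / n ^ 2) atTop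
      (𝓝 (π * x / 4)) := by
  have hpi := Real.pi_pos
  have hZ := cosSum (le_refl (0:ℝ)) (by linarith : (0:ℝ) ≤ 2 * π)
  have hC2 := cosSum (by linarith : (0:ℝ) ≤ 2 * x) (by linarith : 2 * x ≤ 2 * π)
  have hC4 := cosSum (by linarith : (0:ℝ) ≤ 4 * x) (by linarith : 4 * x ≤ 2 * π)
  have combo := (((hZ.mul_left 3).sub (hC2.mul_left 4)).add hC4).div_const 8
  have htend := combo.tendsto_sum_nat
  have hval : (3 * (π ^ 2 / 6 - π * 0 / 2 + 0 ^ 2 / 4) -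
      4 * (π ^ 2 / 6 - π * (2 * x) / 2 + (2 * x) ^ 2 / 4) +
      (π ^ 2 / 6 - π * (4 * x) / 2 + (4 * x) ^ 2 / 4)) / 8 = π * x / 4 := by ring
  rw [hval] at htend
  refine Tendsto.congr ?_ (htend.comp (tendsto_add_atTop_nat 1))
  intro N
  simp only [Function.comp_apply]
  rw [Icc_sum_eq (g := fun n => Real.sin (n * x) ^ 4 / n ^ 2) (by simp) N]
  refine Finset.sum_congr rfl fun n _ => ?_
  have hp := Real.sin_sq_add_cos_sq ((n : ℝ) * x)
  have h2 : Real.cos ((n : ℝ) * (2 * x)) = 1 - 2 * Real.sin ((n : ℝ) * x) ^ 2 := by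
    rw [show (n : ℝ) * (2 * x) = 2 * ((n : ℝ) * x) by ring, Real.cos_two_mul]
    linarith
  have h4 : Real.cos ((n : ℝ) * (4 * x)) = 2 * Real.cos ((n : ℝ) * (2 * x)) ^ 2 - 1 := by
    rw [show (n : ℝ) * (4 * x) = 2 * ((n : ℝ) * (2 * x)) by ring, Real.cos_two_mul]
  rw [show (n : ℝ) * 0 = 0 by ring, Real.cos_zero, h4, h2]
  ring

theorem stmt18 :
    (∀ x : ℝ, 0 < x → x < 2 * π / 3 → Tendsto (fun N : ℕ => ∑ n ∈ Finset.Icc 1 N, Real.sin (n * x) ^ 3 / n) atTop (𝓝 (π / 4))) ∧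
    (∀ x : ℝ, 0 ≤ x → x ≤ π / 2 → Tendsto (fun N : ℕ => ∑ n ∈ Finset.Icc 1 N, Real.sin (n * x) ^ 4 / n ^ 2) atTop (𝓝 (π * x / 4))) ∧
    (Tendsto (fun N : ℕ => ∑ n ∈ Finset.Icc 1 N, Real.sin n ^ 3 / n) atTop (𝓝 (π / 4))) ∧
    (Tendsto (fun N : ℕ => ∑ n ∈ Finset.Icc 1 N, Real.sin n ^ 4 / n ^ 2) atTop (𝓝 (π / 4))) := by
  have hpi := Real.pi_gt_three
  refine ⟨part1, part2, ?_, ?_⟩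
  · have := part1 1 one_pos (by nlinarith)
    simpa using this
  · have := part2 1 (by norm_num) (by nlinarith)
    rw [show π * 1 / 4 = π / 4 by ring] at this
    simpa using this
end
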